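/- arXiv:1204.6633 — 2 statements merged into one kernel-verified Lean document; each statement's English description precedes it below -/
import Mathlib

section
/- Let z, W : ℝ × ℝ → ℝ² be twice continuously differentiable with z(α+2π, t) = z(α,t) + (2π,0), W(α+2π, t) = W(α,t), and ∂_α z(α,t) ≠ 0 for all α, t. Define c(α,t) = ((α+π)/(2π)) ∫_{−π}^{π} ∂_β W(β,t) · ∂_β z(β,t) / |∂_β z(β,t)|² dβ − ∫_{−π}^{α} ∂_β W(β,t) · ∂_β z(β,t) / |∂_β z(β,t)|² dβ. If ∂_t z(α,t) = W(α,t) + c(α,t) ∂_α z(α,t) for all α, t, then ∂_t |∂_α z(α,t)|² = c(α,t) ∂_α |∂_α z(α,t)|² + |∂_α z(α,t)|² · (1/π) ∫_{−π}^{π} ∂_β W(β,t) · ∂_β z(β,t) / |∂_β z(β,t)|² dβ. -/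
/-!
By symmetry of mixed partials and the evolution equation,
`∂_t ∂_α z = ∂_α W + (∂_α c) ∂_α z + c ∂_α² z`, and by the fundamental theorem of calculus
`∂_α c = I / (2π) - (∂_α W · ∂_α z) / |∂_α z|²`, where `I` is the integral in the definition of `c`.
In `∂_t |∂_α z|² = 2 ∂_α z · ∂_t ∂_α z` the term `∂_α W · ∂_α z` therefore cancels, leaving
`c ∂_α |∂_α z|² + |∂_α z|² I / π`.
-/

open Real MeasureTheory

/-- Real inner product on `ℂ ≅ ℝ²`:  `u · v = Re(conj u · v)`. -/
noncomputable def rdot (u v : ℂ) : ℝ := ((starRingEnd ℂ) u * v).re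

lemma rdot_eq_inner (u v : ℂ) : rdot u v = inner ℝ u v := by
  rw [rdot, Complex.inner, mul_comm]

lemma Continuous.rdot_div_norm_sq {X : Type*} [TopologicalSpace X] {u v : X → ℂ}
    (hu : Continuous u) (hv : Continuous v) (hv0 : ∀ x, v x ≠ 0) :
    Continuous fun x => rdot (u x) (v x) / ‖v x‖ ^ 2 := by
  simp only [rdot_eq_inner]
  exact (hu.inner hv).div (hv.norm.pow 2) fun x => by simpa using hv0 x

lemma two_inner_add_sub_rdot_div (u w v : ℂ) (k r : ℝ) (hu : u ≠ 0) :
    2 * inner ℝ u (w + (((k - rdot w u / ‖u‖ ^ 2 : ℝ) : ℂ) * u + r * v)) =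
      r * (2 * inner ℝ u v) + ‖u‖ ^ 2 * (2 * k) := by
  have hu' : ‖u‖ ≠ 0 := norm_ne_zero_iff.mpr hu
  simp only [rdot_eq_inner, inner_add_right, ← Complex.real_smul, real_inner_smul_right,
    real_inner_self_eq_norm_sq, real_inner_comm u]
  field_simp
  ring

section PartialDerivatives

variable {E : Type*} [NormedAddCommGroup E] [NormedSpace ℝ E] {a s : ℝ}

lemma HasFDerivAt.hasDerivAt_fst {F : ℝ × ℝ → E} {L : ℝ × ℝ →L[ℝ] E}
    (h : HasFDerivAt F L (a, s)) : HasDerivAt (fun b => F (b, s)) (L (1, 0)) a :=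
  h.comp_hasDerivAt a ((hasDerivAt_id a).prodMk (hasDerivAt_const a s))

lemma HasFDerivAt.hasDerivAt_snd {F : ℝ × ℝ → E} {L : ℝ × ℝ →L[ℝ] E}
    (h : HasFDerivAt F L (a, s)) : HasDerivAt (fun r => F (a, r)) (L (0, 1)) s :=
  h.comp_hasDerivAt s ((hasDerivAt_const s a).prodMk (hasDerivAt_id s))

lemma DifferentiableAt.comp_prodMk_fst {F : ℝ × ℝ → E}
    (h : DifferentiableAt ℝ F (a, s)) : DifferentiableAt ℝ (fun b => F (b, s)) a :=
  h.hasFDerivAt.hasDerivAt_fst.differentiableAt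

lemma DifferentiableAt.comp_prodMk_snd {F : ℝ × ℝ → E}
    (h : DifferentiableAt ℝ F (a, s)) : DifferentiableAt ℝ (fun r => F (a, r)) s :=
  h.hasFDerivAt.hasDerivAt_snd.differentiableAt

variable {f : ℝ → ℝ → E}

lemma deriv_fst_eq_fderiv (hf : DifferentiableAt ℝ (fun p : ℝ × ℝ => f p.1 p.2) (a, s)) :
    deriv (fun b => f b s) a = fderiv ℝ (fun p : ℝ × ℝ => f p.1 p.2) (a, s) (1, 0) :=
  hf.hasFDerivAt.hasDerivAt_fst.deriv

lemma deriv_snd_eq_fderiv (hf : DifferentiableAt ℝ (fun p : ℝ × ℝ => f p.1 p.2) (a, s)) :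
    deriv (fun r => f a r) s = fderiv ℝ (fun p : ℝ × ℝ => f p.1 p.2) (a, s) (0, 1) :=
  hf.hasFDerivAt.hasDerivAt_snd.deriv

lemma ContDiff.deriv_fst {n : WithTop ℕ∞} (hf : ContDiff ℝ (n + 1) fun p : ℝ × ℝ => f p.1 p.2) :
    ContDiff ℝ n fun p : ℝ × ℝ => deriv (fun b => f b p.2) p.1 := by
  have hdiff := hf.differentiable (by simp)
  simp_rw [deriv_fst_eq_fderiv (hdiff _)]
  exact (hf.fderiv_right le_rfl).clm_apply contDiff_const

lemma deriv_deriv_comm (hf : ContDiff ℝ 2 fun p : ℝ × ℝ => f p.1 p.2) :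
    deriv (fun r => deriv (fun b => f b r) a) s = deriv (fun b => deriv (fun r => f b r) s) a := by
  have hdiff := hf.differentiable (by simp)
  simp_rw [deriv_fst_eq_fderiv (hdiff _), deriv_snd_eq_fderiv (hdiff _)]
  set F := fun p : ℝ × ℝ => f p.1 p.2
  have hF' : HasFDerivAt (fderiv ℝ F) (fderiv ℝ (fderiv ℝ F) (a, s)) (a, s) :=
    ((hf.fderiv_right (m := 1) (by norm_num)).differentiable one_ne_zero _).hasFDerivAt
  have hs : HasDerivAt (fun r => fderiv ℝ F (a, r) (1, 0))
      (fderiv ℝ (fderiv ℝ F) (a, s) (0, 1) (1, 0)) s :=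
    ((ContinuousLinearMap.apply ℝ E ((1 : ℝ), (0 : ℝ))).hasFDerivAt.comp _ hF').hasDerivAt_snd
  have ha : HasDerivAt (fun b => fderiv ℝ F (b, s) (0, 1))
      (fderiv ℝ (fderiv ℝ F) (a, s) (1, 0) (0, 1)) a :=
    ((ContinuousLinearMap.apply ℝ E ((0 : ℝ), (1 : ℝ))).hasFDerivAt.comp _ hF').hasDerivAt_fst
  rw [hs.deriv, ha.deriv]
  exact hf.contDiffAt.isSymmSndFDerivAt (by simp) _ _

lemma hasDerivAt_deriv_fst_of_deriv_snd_eq (hf : ContDiff ℝ 2 fun p : ℝ × ℝ => f p.1 p.2)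
    {g : ℝ → E} {g' : E} (hg : ∀ b, deriv (fun r => f b r) s = g b) (hg' : HasDerivAt g g' a) :
    HasDerivAt (fun r => deriv (fun b => f b r) a) g' s := by
  have hdiff : DifferentiableAt ℝ (fun r => deriv (fun b => f b r) a) s :=
    ((hf.deriv_fst (n := 1)).differentiable one_ne_zero (a, s)).comp_prodMk_snd
  rw [← hg'.deriv, ← funext hg, ← deriv_deriv_comm hf]
  exact hdiff.hasDerivAt

end PartialDerivatives

lemma hasDerivAt_tangentialVelocity {Q : ℝ → ℝ} (hQ : Continuous Q) (I α : ℝ) :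
    HasDerivAt (fun a => (a + π) / (2 * π) * I - ∫ β in (-π)..a, Q β) (I / (2 * π) - Q α) α := by
  have hlin : HasDerivAt (fun a => (a + π) / (2 * π) * I) (I / (2 * π)) α :=
    ((((hasDerivAt_id α).add_const π).div_const (2 * π)).mul_const I).congr_deriv (by ring)
  exact hlin.sub (hQ.integral_hasStrictDerivAt (-π) α).hasDerivAt

theorem tangent_length_transport_general (z W : ℝ → ℝ → ℂ)
    (hz : ContDiff ℝ 2 (fun p : ℝ × ℝ => z p.1 p.2))
    (hW : ContDiff ℝ 2 (fun p : ℝ × ℝ => W p.1 p.2))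
    (hza : ∀ α t : ℝ, deriv (fun a => z a t) α ≠ 0)
    (c : ℝ → ℝ → ℝ)
    (hc : ∀ α t : ℝ, c α t =
      ((α + π) / (2 * π)) * (∫ β in (-π)..π,
          rdot (deriv (fun b => W b t) β) (deriv (fun b => z b t) β) /
            ‖deriv (fun b => z b t) β‖ ^ 2) -
        ∫ β in (-π)..α,
          rdot (deriv (fun b => W b t) β) (deriv (fun b => z b t) β) /
            ‖deriv (fun b => z b t) β‖ ^ 2)
    (hevol : ∀ α t : ℝ,
      deriv (fun s => z α s) t = W α t + (c α t : ℂ) * deriv (fun a => z a t) α) :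
    ∀ α t : ℝ,
      deriv (fun s => ‖deriv (fun a => z a s) α‖ ^ 2) t =
        c α t * deriv (fun a => ‖deriv (fun a' => z a' t) a‖ ^ 2) α +
          ‖deriv (fun a => z a t) α‖ ^ 2 *
            ((1 / π) * ∫ β in (-π)..π,
              rdot (deriv (fun b => W b t) β) (deriv (fun b => z b t) β) /
                ‖deriv (fun b => z b t) β‖ ^ 2) := by
  intro α t
  have hzα := (hz.deriv_fst (n := 1)).differentiable one_ne_zero
  have hslice : Continuous fun β : ℝ => (β, t) := by fun_prop
  set Q := fun β => rdot (deriv (fun b => W b t) β) (deriv (fun b => z b t) β) /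
    ‖deriv (fun b => z b t) β‖ ^ 2
  set I := ∫ β in (-π)..π, Q β
  have hQ : Continuous Q := ((hW.deriv_fst (n := 1)).continuous.comp hslice).rdot_div_norm_sq
    (hzα.continuous.comp hslice) (hza · t)
  have hc' : HasDerivAt (fun a => c a t) (I / (2 * π) - Q α) α := by
    simpa only [hc _ t] using hasDerivAt_tangentialVelocity hQ I α
  have hzαα : HasDerivAt (fun a => deriv (fun b => z b t) a)
      (deriv (fun a => deriv (fun b => z b t) a) α) α :=
    ((hzα (α, t)).comp_prodMk_fst).hasDerivAt
  have hWα : HasDerivAt (fun a => W a t) (deriv (fun b => W b t) α) α :=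
    ((hW.differentiable two_ne_zero (α, t)).comp_prodMk_fst).hasDerivAt
  have hzαt := hasDerivAt_deriv_fst_of_deriv_snd_eq hz (fun a => hevol a t)
    (hWα.add (hc'.ofReal_comp.mul hzαα))
  rw [hzαt.norm_sq.deriv, hzαα.norm_sq.deriv, two_inner_add_sub_rdot_div _ _ _ _ _ (hza α t)]
  ring

/-- The Hou–Lowengrub–Shelley choice of tangential velocity: if
`∂_t z = W + c ∂_α z` with `c` as below, then `|∂_α z|²` satisfies a transport equation
whose source is independent of `α`. -/
theorem tangent_length_transport (z W : ℝ → ℝ → ℂ)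
    (hz : ContDiff ℝ 2 (fun p : ℝ × ℝ => z p.1 p.2))
    (hW : ContDiff ℝ 2 (fun p : ℝ × ℝ => W p.1 p.2))
    (hzper : ∀ α t : ℝ, z (α + 2 * π) t = z α t + 2 * π)
    (hWper : ∀ α t : ℝ, W (α + 2 * π) t = W α t)
    (hza : ∀ α t : ℝ, deriv (fun a => z a t) α ≠ 0)
    (c : ℝ → ℝ → ℝ)
    (hc : ∀ α t : ℝ, c α t =
      ((α + π) / (2 * π)) * (∫ β in (-π)..π,
          rdot (deriv (fun b => W b t) β) (deriv (fun b => z b t) β) /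
            ‖deriv (fun b => z b t) β‖ ^ 2) -
        ∫ β in (-π)..α,
          rdot (deriv (fun b => W b t) β) (deriv (fun b => z b t) β) /
            ‖deriv (fun b => z b t) β‖ ^ 2)
    (hevol : ∀ α t : ℝ,
      deriv (fun s => z α s) t = W α t + (c α t : ℂ) * deriv (fun a => z a t) α) :
    ∀ α t : ℝ,
      deriv (fun s => ‖deriv (fun a => z a s) α‖ ^ 2) t =
        c α t * deriv (fun a => ‖deriv (fun a' => z a' t) a‖ ^ 2) α +
          ‖deriv (fun a => z a t) α‖ ^ 2 *
            ((1 / π) * ∫ β in (-π)..π,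
              rdot (deriv (fun b => W b t) β) (deriv (fun b => z b t) β) /
                ‖deriv (fun b => z b t) β‖ ^ 2) :=
  tangent_length_transport_general z W hz hW hza c hc hevol
end

section
/- Let z : ℝ → ℝ² be twice continuously differentiable with z(α) − (α,0) 2π-periodic, suppose F = sup_{α ∈ ℝ, 0 < |β| ≤ π} |β| / |z(α) − z(α−β)| is finite, and set M₁ = sup_α |z'(α)| and M₂ = sup_α |z''(α)|. Then for all α ∈ ℝ and all β with 0 < |β| ≤ π, |z'(α)| · | β / |z(α) − z(α−β)|² − 1 / ( |z'(α)|² β ) | ≤ M₂ F² (1 + F M₁). -/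
/-!
With `a = |z'(α)|` and `d = |z(α) − z(α−β)|`, the bracket times `a` equals
`(a|β| − d)(a|β| + d) / (a|β|d²)` up to sign. Taylor's formula gives `|a|β| − d| ≤ M₂β²`, so the
quantity is at most `M₂(β²/d² + |β|/(ad))`, and the arc-chord bounds `|β| ≤ F d` and `1 ≤ F a`
(the latter is the arc-chord condition in the limit `β → 0`) bound it by `2M₂F²`. Finally
`1 ≤ F a ≤ F M₁`.
-/

open Real Filter Topology

section Taylor

variable {E : Type*} [NormedAddCommGroup E] [NormedSpace ℝ E]

theorem norm_sub_sub_smul_deriv_le {f : ℝ → E} {M : ℝ} (hf : Differentiable ℝ f)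
    (hf' : Differentiable ℝ (deriv f)) (hM : ∀ x, ‖deriv (deriv f) x‖ ≤ M) (x h : ℝ) :
    ‖f x - f (x - h) - h • deriv f x‖ ≤ M * h ^ 2 := by
  have hM₀ : 0 ≤ M := (norm_nonneg _).trans (hM x)
  have hlip : ∀ y, ‖deriv f y - deriv f x‖ ≤ M * |y - x| := fun y =>
    convex_univ.norm_image_sub_le_of_norm_deriv_le (fun y _ => hf' y) (fun y _ => hM y)
      trivial trivial
  have key := (convex_uIcc (x - h) x).norm_image_sub_le_of_norm_hasDerivWithin_le
    (f := fun t => f t - t • deriv f x) (f' := fun t => deriv f t - deriv f x) (C := M * |h|)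
    (fun t _ => ((hf t).hasDerivAt.sub
      (by simpa using (hasDerivAt_id t).smul_const (deriv f x))).hasDerivWithinAt)
    (fun t ht => (hlip t).trans <| mul_le_mul_of_nonneg_left
      (by simpa [abs_sub_comm] using Set.abs_sub_right_of_mem_uIcc ht) hM₀)
    Set.left_mem_uIcc Set.right_mem_uIcc
  calc ‖f x - f (x - h) - h • deriv f x‖
      = ‖(f x - x • deriv f x) - (f (x - h) - (x - h) • deriv f x)‖ := by
        rw [sub_smul]; congr 1; abel
    _ ≤ M * |h| * ‖x - (x - h)‖ := key
    _ = M * h ^ 2 := by rw [sub_sub_cancel, Real.norm_eq_abs, mul_assoc, ← sq, sq_abs]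

theorem abs_norm_deriv_mul_abs_sub_norm_sub_le {f : ℝ → E} {M : ℝ} (hf : Differentiable ℝ f)
    (hf' : Differentiable ℝ (deriv f)) (hM : ∀ x, ‖deriv (deriv f) x‖ ≤ M) (x h : ℝ) :
    |‖deriv f x‖ * |h| - ‖f x - f (x - h)‖| ≤ M * h ^ 2 :=
  calc |‖deriv f x‖ * |h| - ‖f x - f (x - h)‖|
      = |‖h • deriv f x‖ - ‖f x - f (x - h)‖| := by rw [norm_smul, Real.norm_eq_abs, mul_comm]
    _ ≤ ‖h • deriv f x - (f x - f (x - h))‖ := abs_norm_sub_norm_le _ _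
    _ = ‖f x - f (x - h) - h • deriv f x‖ := norm_sub_rev _ _
    _ ≤ M * h ^ 2 := norm_sub_sub_smul_deriv_le hf hf' hM x h

theorem HasDerivAt.one_le_mul_norm {f : ℝ → E} {f' : E} {x F : ℝ} (hf : HasDerivAt f f' x)
    (hF : ∀ᶠ t in 𝓝[≠] 0, |t| ≤ F * ‖f (x + t) - f x‖) : 1 ≤ F * ‖f'‖ := by
  refine ge_of_tendsto (hf.tendsto_slope_zero.norm.const_mul F) ?_
  filter_upwards [hF, self_mem_nhdsWithin] with t ht ht₀
  rw [norm_smul, norm_inv, Real.norm_eq_abs, mul_left_comm, ← div_eq_inv_mul,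
    le_div_iff₀ (abs_pos.mpr ht₀)]
  linarith

end Taylor

theorem abs_div_sub_one_div_mul_eq_abs (x c k : ℝ) :
    |x / c - 1 / (k * x)| = |(|x| / c - 1 / (k * |x|))| := by
  rcases abs_choice x with h | h <;> rw [h]
  rw [← abs_neg]; ring_nf

theorem mul_abs_div_sq_sub_one_div_le {a b d F M : ℝ} (ha₀ : 0 ≤ a) (hb : 0 < b)
    (ha : 1 ≤ F * a) (hd : b ≤ F * d) (he : |a * b - d| ≤ M * b ^ 2) :
    a * |b / d ^ 2 - 1 / (a ^ 2 * b)| ≤ 2 * M * F ^ 2 := by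
  have hF : 0 < F := pos_of_mul_pos_left (by linarith) ha₀
  have ha_pos : 0 < a := pos_of_mul_pos_right (by linarith) hF.le
  have hd₀ : 0 < d := pos_of_mul_pos_right (hb.trans_le hd) hF.le
  have hM : 0 ≤ M := nonneg_of_mul_nonneg_left ((abs_nonneg _).trans he) (by positivity)
  have hbd : b / d ≤ F := (div_le_iff₀ hd₀).mpr hd
  have hinv : 1 / a ≤ F := (div_le_iff₀ ha_pos).mpr (by linarith)
  set e := a * b - d
  have split : a * (b / d ^ 2 - 1 / (a ^ 2 * b)) = e / d ^ 2 + e / (a * b * d) := by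
    field_simp; ring
  calc a * |b / d ^ 2 - 1 / (a ^ 2 * b)|
      = |e / d ^ 2 + e / (a * b * d)| := by rw [← split, abs_mul, abs_of_pos ha_pos]
    _ ≤ |e| / d ^ 2 + |e| / (a * b * d) := by
        refine (abs_add_le _ _).trans_eq ?_
        rw [abs_div, abs_div, abs_of_pos (by positivity : 0 < d ^ 2),
          abs_of_pos (by positivity : 0 < a * b * d)]
    _ ≤ M * b ^ 2 / d ^ 2 + M * b ^ 2 / (a * b * d) := by gcongr
    _ = M * ((b / d) ^ 2 + (b / d) * (1 / a)) := by field_simp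
    _ ≤ M * (F ^ 2 + F * F) := by gcongr
    _ = 2 * M * F ^ 2 := by ring

theorem kernel_D2_bound_general (z : ℝ → ℂ) (F M₁ M₂ : ℝ)
    (hz : ContDiff ℝ 2 z)
    (hF : ∀ α β : ℝ, 0 < |β| → |β| ≤ π → |β| ≤ F * ‖z α - z (α - β)‖)
    (hM₁ : ∀ α : ℝ, ‖deriv z α‖ ≤ M₁)
    (hM₂ : ∀ α : ℝ, ‖deriv (deriv z) α‖ ≤ M₂) :
    ∀ α β : ℝ, 0 < |β| → |β| ≤ π →
      ‖deriv z α‖ *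
          |β / ‖z α - z (α - β)‖ ^ 2 -
            1 / (‖deriv z α‖ ^ 2 * β)| ≤ M₂ * F ^ 2 * (1 + F * M₁) := by
  intro α β hβ hβπ
  have hz' : Differentiable ℝ z := hz.differentiable two_ne_zero
  have hz'' : Differentiable ℝ (deriv z) :=
    (contDiff_succ_iff_deriv.mp hz).2.2.differentiable one_ne_zero
  have hchord : ∀ᶠ t in 𝓝[≠] 0, |t| ≤ F * ‖z (α + t) - z α‖ := by
    filter_upwards [self_mem_nhdsWithin,
      nhdsWithin_le_nhds (Metric.ball_mem_nhds (0 : ℝ) pi_pos)] with t ht htπ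
    simpa using hF (α + t) t (abs_pos.mpr ht) (by simpa using (mem_ball_zero_iff.mp htπ).le)
  have hFa : 1 ≤ F * ‖deriv z α‖ := (hz' α).hasDerivAt.one_le_mul_norm hchord
  have hFM₁ : 1 ≤ F * M₁ :=
    hFa.trans (mul_le_mul_of_nonneg_left (hM₁ α)
      (pos_of_mul_pos_left (by linarith) (norm_nonneg _)).le)
  have hM₂₀ : 0 ≤ M₂ := (norm_nonneg _).trans (hM₂ α)
  rw [abs_div_sub_one_div_mul_eq_abs]
  calc _ ≤ 2 * M₂ * F ^ 2 :=
        mul_abs_div_sq_sub_one_div_le (norm_nonneg _) hβ hFa (hF α β hβ hβπ)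
          (by rw [sq_abs]; exact abs_norm_deriv_mul_abs_sub_norm_sub_le hz' hz'' hM₂ α β)
    _ = M₂ * F ^ 2 * (1 + 1) := by ring
    _ ≤ M₂ * F ^ 2 * (1 + F * M₁) := by gcongr

/-- The bound on the term `D₂` of the paper's kernel decomposition: for a `C²`,
horizontally periodic curve `z` (identifying `ℝ²` with `ℂ`) with arc-chord constant `F`,
`M₁ = sup |z'|` and `M₂ = sup |z''|`,
`|z'(α)| · | β/|z(α)−z(α−β)|² − 1/(|z'(α)|²β) | ≤ M₂ F² (1 + F M₁)` for `0 < |β| ≤ π`. -/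
theorem kernel_D2_bound (z : ℝ → ℂ) (F M₁ M₂ : ℝ)
    (hz : ContDiff ℝ 2 z)
    (hper : Function.Periodic (fun α : ℝ => z α - α) (2 * π))
    (hF : ∀ α β : ℝ, 0 < |β| → |β| ≤ π → |β| ≤ F * ‖z α - z (α - β)‖)
    (hM₁ : ∀ α : ℝ, ‖deriv z α‖ ≤ M₁)
    (hM₂ : ∀ α : ℝ, ‖deriv (deriv z) α‖ ≤ M₂) :
    ∀ α β : ℝ, 0 < |β| → |β| ≤ π →
      ‖deriv z α‖ *
          |β / ‖z α - z (α - β)‖ ^ 2 -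
            1 / (‖deriv z α‖ ^ 2 * β)| ≤ M₂ * F ^ 2 * (1 + F * M₁) :=
  kernel_D2_bound_general z F M₁ M₂ hz hF hM₁ hM₂
end
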